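/- arXiv:2001.08549 — 3 statements merged into one kernel-verified Lean document; each statement's English description precedes it below -/
import Mathlib

section
/- For all integers n ≥ 1 and 1 ≤ k ≤ n−1, the Dushnik–Miller dimension of the poset Q^n_{1,k} of subsets of {1,…,n} of cardinality 1 or k, ordered by inclusion, equals N(n, k+1), the minimum cardinality of a (k+1)-suitable set of permutations of {1,…,n}. -/
/-- The Dushnik-Miller dimension of a poset `P`: the least `d` such that there is
an order embedding of `P` into `ℝ^d` with the componentwise order. -/
noncomputable def dimDM (P : Type*) [PartialOrder P] : ℕ :=
  sInf {d : ℕ | ∃ f : P → (Fin d → ℝ), ∀ a b : P, (f a ≤ f b ↔ a ≤ b)}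

/-- A set `S` of permutations of `{1,…,n}` (modelled as `Fin n`) is `k`-suitable if for
every pointed `k`-subset `(A, a)` there is `σ ∈ S` with `σ b ≤ σ a` for every `b ∈ A`. -/
def IsSuitable (n k : ℕ) (S : Finset (Equiv.Perm (Fin n))) : Prop :=
  ∀ A : Finset (Fin n), A.card = k → ∀ a ∈ A, ∃ σ ∈ S, ∀ b ∈ A, σ b ≤ σ a

/-- `N(n, k)`: the minimum cardinality of a `k`-suitable set of permutations of `{1,…,n}`. -/
noncomputable def suitableNumber (n k : ℕ) : ℕ :=
  sInf {m : ℕ | ∃ S : Finset (Equiv.Perm (Fin n)), IsSuitable n k S ∧ S.card = m}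

/-
Embed `Q^n_{1,k}` by `X ↦ (max_{a ∈ X} σ a)_{σ ∈ S}`. If `x ∈ X \ Y`, then `Y ∪ {x}` has at
most `k + 1` elements, so a `(k+1)`-suitable `S` contains some `σ` ranking `x` above all of `Y`,
which separates `X` from `Y`; hence `dim ≤ N(n, k+1)`. Conversely, the coordinates of an
embedding restricted to the singletons give `d` rankings of `[n]`; for a pointed `(k+1)`-set
`(B, b)`, the incomparability `{b} ≰ B \ {b}` is witnessed by a coordinate whose ranking puts `b`
on top of `B`, hence `N(n, k+1) ≤ dim`.
-/

open Finset Equiv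

section Dimension

variable {P : Type*} [PartialOrder P]

theorem exists_embedding_fin_card {ι : Type*} [Fintype ι] (f : P → ι → ℝ)
    (hf : ∀ a b, f a ≤ f b ↔ a ≤ b) :
    ∃ g : P → Fin (Fintype.card ι) → ℝ, ∀ a b, g a ≤ g b ↔ a ≤ b := by
  let e := Fintype.equivFin ι
  refine ⟨fun a j => f a (e.symm j), fun a b => ?_⟩
  rw [← hf]
  exact ⟨fun h i => by simpa using h (e i), fun h j => h (e.symm j)⟩

theorem dimDM_le_card_of_embedding {ι : Type*} [Fintype ι] (f : P → ι → ℝ)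
    (hf : ∀ a b, f a ≤ f b ↔ a ≤ b) : dimDM P ≤ Fintype.card ι :=
  Nat.sInf_le (exists_embedding_fin_card f hf)

theorem exists_embedding_fin_dimDM {ι : Type*} [Fintype ι] (f : P → ι → ℝ)
    (hf : ∀ a b, f a ≤ f b ↔ a ≤ b) :
    ∃ g : P → Fin (dimDM P) → ℝ, ∀ a b, g a ≤ g b ↔ a ≤ b :=
  Nat.sInf_mem (s := {d | ∃ g : P → Fin d → ℝ, ∀ a b, g a ≤ g b ↔ a ≤ b})
    ⟨_, exists_embedding_fin_card f hf⟩

end Dimension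

theorem isSuitable_univ (n k : ℕ) : IsSuitable n k univ := by
  intro A _ a _
  obtain ⟨m, rfl⟩ := Nat.exists_eq_add_one_of_ne_zero a.pos.ne'
  exact ⟨swap a (Fin.last m), mem_univ _, fun b _ => by simpa using Fin.le_last _⟩

theorem suitableNumber_le_card {n k : ℕ} {S : Finset (Perm (Fin n))} (hS : IsSuitable n k S) :
    suitableNumber n k ≤ S.card :=
  Nat.sInf_le ⟨S, hS, rfl⟩

theorem exists_isSuitable_card_eq_suitableNumber (n k : ℕ) :
    ∃ S, IsSuitable n k S ∧ S.card = suitableNumber n k :=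
  Nat.sInf_mem (s := {m | ∃ S, IsSuitable n k S ∧ S.card = m}) ⟨_, univ, isSuitable_univ n k, rfl⟩

/-- The `+ 1` makes the maximum over the empty set strictly below every rank. -/
theorem subset_iff_forall_sup_rank_le {n k : ℕ} {S : Finset (Perm (Fin n))} (hS : IsSuitable n (k + 1) S)
    (hkn : k + 1 ≤ n) {X Y : Finset (Fin n)} (hY : Y.card ≤ k) :
    X ⊆ Y ↔ ∀ σ ∈ S, X.sup (fun a => (σ a : ℕ) + 1) ≤ Y.sup (fun a => (σ a : ℕ) + 1) := by
  refine ⟨fun hXY σ _ => sup_mono hXY, fun h x hxX => ?_⟩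
  by_contra hxY
  obtain ⟨B, hYB, hB⟩ := exists_superset_card_eq (s := insert x Y) (n := k + 1)
    ((card_insert_le x Y).trans (by omega)) (by simpa using hkn)
  obtain ⟨σ, hσS, hσ⟩ := hS B hB x (hYB (mem_insert_self x Y))
  have hY_below : Y.sup (fun a => (σ a : ℕ) + 1) ≤ σ x := by
    refine Finset.sup_le fun y hy => Nat.succ_le_of_lt (Fin.lt_def.mp ?_)
    refine (hσ y (hYB (mem_insert_of_mem hy))).lt_of_ne fun hyx => ?_
    exact hxY (σ.injective hyx ▸ hy)
  have hx_le : (σ x : ℕ) + 1 ≤ X.sup (fun a => (σ a : ℕ) + 1) :=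
    le_sup (f := fun a => (σ a : ℕ) + 1) hxX
  have := h σ hσS
  omega

theorem Tuple.sort_symm_lt_of_lt {α : Type*} [LinearOrder α] {n : ℕ} (v : Fin n → α)
    {x y : Fin n} (h : v x < v y) : (Tuple.sort v).symm x < (Tuple.sort v).symm y :=
  (Tuple.monotone_sort v).reflect_lt (by simpa using h)

section OneOrK

variable {n k : ℕ}

theorem exists_embedding_of_isSuitable (hk1 : 1 ≤ k) (hkn : k + 1 ≤ n)
    {S : Finset (Perm (Fin n))} (hS : IsSuitable n (k + 1) S) :
    ∃ f : {A : Finset (Fin n) // A.card = 1 ∨ A.card = k} → S → ℝ, ∀ X Y, f X ≤ f Y ↔ X ≤ Y := by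
  refine ⟨fun X σ => ((X.1.sup fun a => (σ.1 a : ℕ) + 1 : ℕ) : ℝ), fun X Y => ?_⟩
  have hY : Y.1.card ≤ k := by rcases Y.2 with h | h <;> omega
  change _ ↔ X.1 ⊆ Y.1
  rw [subset_iff_forall_sup_rank_le hS hkn hY, Pi.le_def, Subtype.forall]
  simp only [Nat.cast_le]

theorem isSuitable_image_sort {ι : Type*} [Fintype ι]
    (f : {A : Finset (Fin n) // A.card = 1 ∨ A.card = k} → ι → ℝ)
    (hf : ∀ X Y, f X ≤ f Y ↔ X ≤ Y) :
    IsSuitable n (k + 1)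
      (univ.image fun i => (Tuple.sort fun x => f ⟨{x}, .inl (card_singleton x)⟩ i).symm) := by
  intro B hB b hb
  let single : Fin n → {A : Finset (Fin n) // A.card = 1 ∨ A.card = k} :=
    fun x => ⟨{x}, .inl (card_singleton x)⟩
  let A : {A : Finset (Fin n) // A.card = 1 ∨ A.card = k} :=
    ⟨B.erase b, .inr (by rw [card_erase_of_mem hb, hB]; rfl)⟩
  have hb_not_le : ¬ f (single b) ≤ f A := by
    rw [hf]
    exact fun h => notMem_erase b B (h (mem_singleton_self b))
  simp only [Pi.le_def, not_forall, not_le] at hb_not_le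
  obtain ⟨i, hi⟩ := hb_not_le
  refine ⟨_, mem_image_of_mem _ (mem_univ i), fun c hc => ?_⟩
  rcases eq_or_ne c b with rfl | hcb
  · exact le_rfl
  · have hcA : single c ≤ A := singleton_subset_iff.mpr (mem_erase.mpr ⟨hcb, hc⟩)
    exact (Tuple.sort_symm_lt_of_lt _ (((hf _ _).mpr hcA i).trans_lt hi)).le

end OneOrK

theorem dimDM_oneOrK_eq_suitableNumber_general (n k : ℕ) (hk1 : 1 ≤ k)
    (hk2 : k ≤ n - 1) :
    dimDM {A : Finset (Fin n) // A.card = 1 ∨ A.card = k} = suitableNumber n (k + 1) := by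
  have hkn : k + 1 ≤ n := by omega
  obtain ⟨S, hS, hS_card⟩ := exists_isSuitable_card_eq_suitableNumber n (k + 1)
  obtain ⟨f, hf⟩ := exists_embedding_of_isSuitable hk1 hkn hS
  obtain ⟨g, hg⟩ := exists_embedding_fin_dimDM f hf
  apply le_antisymm
  · simpa [hS_card] using dimDM_le_card_of_embedding f hf
  · simpa using suitableNumber_le_card (isSuitable_image_sort g hg) |>.trans card_image_le

/-- `dim(Q^n_{1,k}) = N(n, k+1)` for `1 ≤ k ≤ n - 1`. -/
theorem dimDM_oneOrK_eq_suitableNumber (n k : ℕ) (hn : 1 ≤ n) (hk1 : 1 ≤ k)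
    (hk2 : k ≤ n - 1) :
    dimDM {A : Finset (Fin n) // A.card = 1 ∨ A.card = k} = suitableNumber n (k + 1) :=
  dimDM_oneOrK_eq_suitableNumber_general n k hk1 hk2
end

section
/- For all integers 2 ≤ k ≤ n, N₂(n, k) ≤ ⌈e·k²·log n⌉; that is, there exists a k-suitable family of subsets of {1,…,n} of cardinality at most ⌈e·k²·log n⌉. -/
/-!
Colour `{1,…,n}` uniformly at random with `k` colours and let `B` be one colour class. For a
pointed `k`-subset `(A, a)`, the event `A ∩ B = {a}` has probability
`k⁻¹ (1 - k⁻¹) ^ (k - 1) ≥ (e k)⁻¹`. Hence `m ≥ e k² log n` independent colourings all miss a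
fixed `(A, a)` with probability at most `(1 - (e k)⁻¹) ^ m ≤ n ^ (-k)`, and since there are
only `k · C(n, k) < n ^ k` pointed `k`-subsets, some `m` colourings serve all of them at once.
-/

/-- A family `S` of subsets of `{1,…,n}` (modelled as `Fin n`) is a `k`-suitable family
if for every pointed `k`-subset `(A, a)` there is `B ∈ S` with `A ∩ B = {a}`. -/
def IsSuitableFamily (n k : ℕ) (S : Finset (Finset (Fin n))) : Prop :=
  ∀ A : Finset (Fin n), A.card = k → ∀ a ∈ A, ∃ B ∈ S, A ∩ B = {a}

/-- `N₂(n, k)`: the minimum cardinality of a `k`-suitable family of subsets of `{1,…,n}`. -/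
noncomputable def suitableNumber2 (n k : ℕ) : ℕ :=
  sInf {m : ℕ | ∃ S : Finset (Finset (Fin n)), IsSuitableFamily n k S ∧ S.card = m}

open Finset Real
open scoped Nat

theorem exists_fun_fin_forall_exists_mem {ι α : Type*} [Fintype α] [Nonempty α]
    (P : Finset ι) (G : ι → Finset α) {p : ℝ} {m : ℕ}
    (hG : ∀ q ∈ P, p * Fintype.card α ≤ #(G q)) (hP : #P * (1 - p) ^ m < 1) :
    ∃ ω : Fin m → α, ∀ q ∈ P, ∃ i, ω i ∈ G q := by
  classical
  set bad := P.biUnion fun q ↦ Fintype.piFinset fun _ : Fin m ↦ (G q)ᶜ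
  have hbad : (#bad : ℝ) < Fintype.card (Fin m → α) := by
    have hα : (0 : ℝ) < Fintype.card α := by exact_mod_cast Fintype.card_pos
    calc (#bad : ℝ) ≤ ∑ q ∈ P, (#(G q)ᶜ : ℝ) ^ m := by
          exact_mod_cast card_biUnion_le.trans_eq (by simp)
      _ ≤ ∑ q ∈ P, ((1 - p) * Fintype.card α) ^ m := by
          gcongr with q hq
          rw [card_compl, Nat.cast_sub (card_le_univ _)]
          linarith [hG q hq]
      _ = #P * (1 - p) ^ m * Fintype.card α ^ m := by
          rw [sum_const, nsmul_eq_mul, mul_pow, mul_assoc]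
      _ < Fintype.card (Fin m → α) := by
          rw [Fintype.card_fun, Fintype.card_fin, Nat.cast_pow]
          exact mul_lt_of_lt_one_left (by positivity) hP
  obtain ⟨ω, -, hω⟩ := exists_mem_notMem_of_card_lt_card (s := bad) (t := univ)
    (by exact_mod_cast hbad)
  refine ⟨ω, fun q hq ↦ ?_⟩
  by_contra! h
  exact hω (mem_biUnion.2 ⟨q, hq, Fintype.mem_piFinset.2 fun i ↦ mem_compl.2 (h i)⟩)

theorem add_one_pow_le_exp_one_mul_pow (j : ℕ) : ((j : ℝ) + 1) ^ j ≤ exp 1 * j ^ j := by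
  rcases Nat.eq_zero_or_pos j with rfl | hj
  · simp [one_le_exp zero_le_one]
  calc ((j : ℝ) + 1) ^ j = (1 + (j : ℝ)⁻¹) ^ j * j ^ j := by
        rw [← mul_pow, add_mul, inv_mul_cancel₀ (by positivity), one_mul, add_comm]
    _ ≤ exp 1 * j ^ j := by gcongr; exact one_add_inv_pow_le_exp

theorem card_filter_inter_fiber_eq_singleton {α β : Type*} [Fintype α] [DecidableEq α]
    [Fintype β] [DecidableEq β] (z : β) {A : Finset α} {a : α} (ha : a ∈ A) :
    #{f : α → β | A ∩ ({x | f x = z} : Finset α) = {a}} =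
      (Fintype.card β - 1) ^ (#A - 1) * Fintype.card β ^ (Fintype.card α - #A) := by
  set T : α → Finset β := fun x ↦ if x = a then {z} else if x ∈ A then {z}ᶜ else univ
  have hT : ({f | A ∩ ({x | f x = z} : Finset α) = {a}} : Finset (α → β)) =
      Fintype.piFinset T := by
    ext f
    simp only [mem_filter, mem_univ, true_and, Fintype.mem_piFinset, Finset.ext_iff,
      mem_inter, mem_singleton]
    refine forall_congr' fun x ↦ ?_
    by_cases hxa : x = a
    · subst hxa; simp [T, ha]
    · by_cases hxA : x ∈ A <;> simp [T, hxa, hxA]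
  rw [hT, Fintype.card_piFinset, ← prod_mul_prod_compl A, ← mul_prod_erase A _ ha]
  have hA : ∀ x ∈ A.erase a, #(T x) = Fintype.card β - 1 := fun x hx ↦ by
    simp [T, ne_of_mem_erase hx, mem_of_mem_erase hx, card_compl]
  have hAc : ∀ x ∈ Aᶜ, #(T x) = Fintype.card β := fun x hx ↦ by
    have : x ≠ a := by rintro rfl; exact mem_compl.1 hx ha
    simp [T, this, mem_compl.1 hx]
  rw [prod_congr rfl hA, prod_congr rfl hAc]
  simp [T, card_erase_of_mem ha, card_compl]

theorem inv_exp_one_mul_mul_pow_le {k n : ℕ} (hk : 1 ≤ k) (hkn : k ≤ n) :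
    (exp 1 * k)⁻¹ * (k : ℝ) ^ n ≤ ((k - 1 : ℕ) : ℝ) ^ (k - 1) * (k : ℝ) ^ (n - k) := by
  obtain ⟨j, rfl⟩ := Nat.exists_eq_add_of_le' hk
  have hsplit : ((j + 1 : ℕ) : ℝ) ^ n =
      ((j : ℝ) + 1) ^ j * (j + 1) * (j + 1) ^ (n - (j + 1)) := by
    rw [← pow_succ, ← pow_add, Nat.add_sub_cancel' hkn]; push_cast; ring
  rw [hsplit, Nat.add_sub_cancel, mul_inv, Nat.cast_succ]
  calc (exp 1)⁻¹ * ((j : ℝ) + 1)⁻¹ * (((j : ℝ) + 1) ^ j * (j + 1) * (j + 1) ^ (n - (j + 1)))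
      = (exp 1)⁻¹ * ((j : ℝ) + 1) ^ j * (j + 1) ^ (n - (j + 1)) := by field_simp
    _ ≤ (exp 1)⁻¹ * (exp 1 * j ^ j) * (j + 1) ^ (n - (j + 1)) := by
        gcongr; exact add_one_pow_le_exp_one_mul_pow j
    _ = (j : ℝ) ^ j * (j + 1) ^ (n - (j + 1)) := by field_simp

theorem mul_choose_lt_pow {n k : ℕ} (hn : n ≠ 0) (hk : 2 ≤ k) : k * n.choose k < n ^ k :=
  calc k * n.choose k ≤ k ! * n.choose k := Nat.mul_le_mul_right _ k.self_le_factorial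
    _ = n.descFactorial k := (Nat.descFactorial_eq_factorial_mul_choose n k).symm
    _ < n ^ k := Nat.descFactorial_lt_pow hn hk

theorem mul_choose_mul_one_sub_pow_lt_one {n k m : ℕ} (hk : 2 ≤ k) (hkn : k ≤ n)
    (hm : exp 1 * k ^ 2 * log n ≤ m) :
    ((k * n.choose k : ℕ) : ℝ) * (1 - (exp 1 * k)⁻¹) ^ m < 1 := by
  have hn : (0 : ℝ) < n := by exact_mod_cast (by omega : 0 < n)
  have hek : 1 ≤ exp 1 * k := one_le_mul_of_one_le_of_one_le (one_le_exp zero_le_one)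
    (by exact_mod_cast (by omega : 1 ≤ k))
  have hdecay : (1 - (exp 1 * k)⁻¹) ^ m ≤ ((n : ℝ) ^ k)⁻¹ :=
    calc (1 - (exp 1 * k)⁻¹) ^ m ≤ exp (-(exp 1 * k)⁻¹) ^ m := by
          gcongr
          · exact sub_nonneg.2 (inv_le_one_of_one_le₀ hek)
          · exact one_sub_le_exp_neg _
      _ = exp (-(m / (exp 1 * k))) := by rw [← exp_nat_mul]; ring_nf
      _ ≤ exp (-(k * log n)) := by
          gcongr
          rw [le_div_iff₀ (by positivity)]
          nlinarith
      _ = ((n : ℝ) ^ k)⁻¹ := by rw [exp_neg, exp_nat_mul, exp_log hn]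
  calc ((k * n.choose k : ℕ) : ℝ) * (1 - (exp 1 * k)⁻¹) ^ m
      ≤ ((k * n.choose k : ℕ) : ℝ) * ((n : ℝ) ^ k)⁻¹ := by gcongr
    _ < (n : ℝ) ^ k * ((n : ℝ) ^ k)⁻¹ := by
        gcongr; exact_mod_cast mul_choose_lt_pow (by omega) hk
    _ = 1 := mul_inv_cancel₀ (by positivity)

theorem exists_isSuitableFamily_card_le {n k m : ℕ} (hk : 1 ≤ k) (hkn : k ≤ n)
    (hm : ((k * n.choose k : ℕ) : ℝ) * (1 - (exp 1 * k)⁻¹) ^ m < 1) :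
    ∃ S, IsSuitableFamily n k S ∧ #S ≤ m := by
  have : NeZero k := ⟨by omega⟩
  set P := (powersetCard k (univ : Finset (Fin n))).sigma fun A ↦ A
  have hP : #P = k * n.choose k := by
    rw [card_sigma, sum_const_nat fun A hA ↦ (mem_powersetCard_univ.1 hA), card_powersetCard,
      card_univ, Fintype.card_fin, mul_comm]
  set G : (Σ _ : Finset (Fin n), Fin n) → Finset (Fin n → Fin k) :=
    fun q ↦ {f | q.1 ∩ ({x | f x = 0} : Finset (Fin n)) = {q.2}}
  have hG : ∀ q ∈ P, (exp 1 * k)⁻¹ * Fintype.card (Fin n → Fin k) ≤ #(G q) := by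
    rintro ⟨A, a⟩ hq
    obtain ⟨hA, ha⟩ := mem_sigma.1 hq
    rw [card_filter_inter_fiber_eq_singleton 0 ha, mem_powersetCard_univ.1 hA]
    simpa using inv_exp_one_mul_mul_pow_le hk hkn
  obtain ⟨ω, hω⟩ := exists_fun_fin_forall_exists_mem P G hG (by rwa [hP])
  refine ⟨univ.image fun i ↦ ({x | ω i x = 0} : Finset (Fin n)), fun A hA a ha ↦ ?_,
    card_image_le.trans (by simp)⟩
  obtain ⟨i, hi⟩ := hω ⟨A, a⟩ (mem_sigma.2 ⟨mem_powersetCard_univ.2 hA, ha⟩)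
  exact ⟨_, mem_image_of_mem _ (mem_univ i), (mem_filter.1 hi).2⟩

/-- For `2 ≤ k ≤ n`, one has `N₂(n, k) ≤ ⌈e k² log n⌉`: there is a `k`-suitable family
of subsets of `{1,…,n}` of cardinality at most `⌈e k² log n⌉`. -/
theorem suitableNumber2_le (n k : ℕ) (hk : 2 ≤ k) (hkn : k ≤ n) :
    suitableNumber2 n k ≤ ⌈Real.exp 1 * (k : ℝ) ^ 2 * Real.log n⌉₊ ∧
      ∃ S : Finset (Finset (Fin n)), IsSuitableFamily n k S ∧
        S.card ≤ ⌈Real.exp 1 * (k : ℝ) ^ 2 * Real.log n⌉₊ := by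
  obtain ⟨S, hS, hcard⟩ := exists_isSuitableFamily_card_le (by omega) hkn
    (mul_choose_mul_one_sub_pow_lt_one hk hkn (Nat.le_ceil _))
  have hmin : suitableNumber2 n k ≤ S.card := Nat.sInf_le ⟨S, hS, rfl⟩
  exact ⟨hmin.trans hcard, S, hS, hcard⟩
end

section
/- For all integers n ≥ 2 and 1 ≤ k ≤ n−1, the 2-dimension of the poset M^n_{[0,k]} of multisets with elements in {1,…,n} and total size (with multiplicity) at most k, ordered by multiset inclusion, is strictly less than e·((π²/6)·k² + 2k·log k + 3k)·log n + k. -/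
/-- The 2-dimension of a poset `P`: the least `d` such that there is an order
embedding of `P` into the powerset of `{1,…,d}` ordered by inclusion. -/
noncomputable def dim2 (P : Type*) [PartialOrder P] : ℕ :=
  sInf {d : ℕ | ∃ f : P → Finset (Fin d), ∀ a b : P, (f a ⊆ f b ↔ a ≤ b)}

/-!
For every threshold `c ∈ [1, k]` pick functions `g : [n] → ℕ` such that for each point `i` and
each set `T` of at most `k / c` points other than `i`, some `g` satisfies `g i < c ≤ g x` on `T`.
Sending a multiset `M` to the pairs `(c, g)` with `g i < c ≤ count i M` for some `i` is an order
embedding: if `count i a > count i b`, take `c = count i a`; the points where `b` has multiplicity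
at least `c` avoid `i` and number at most `k / c`, so a suitable `g` witnesses `(c, g) ∈ a \ b`.

For `g` uniform in `[n] → [0, k + c)`, a pair `(i, T)` is separated with probability
`c / (k + c) · (k / (k + c)) ^ #T ≥ c / (e (k + c))`, and there are at most `n ^ (k / c + 1)`
pairs, so by the union bound about `e (k / c + 1)² log n` random functions suffice. Summing over
`c` and using `∑ 1 / c² < π² / 6` and `∑ 1 / c ≤ 1 + log k` gives the bound.
-/

open Finset Real

lemma dim2_le_card {P ι : Type*} [PartialOrder P] [Fintype ι] (f : P → Finset ι)
    (hf : ∀ a b, f a ⊆ f b ↔ a ≤ b) : dim2 P ≤ Fintype.card ι :=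
  Nat.sInf_le ⟨fun a => (f a).map (Fintype.equivFin ι).toEmbedding, fun a b => by
    rw [map_subset_map]; exact hf a b⟩

def Separates {α : Type*} (c : ℕ) (g : α → ℕ) (i : α) (T : Finset α) : Prop :=
  g i < c ∧ ∀ x ∈ T, c ≤ g x

instance {α : Type*} (c : ℕ) (g : α → ℕ) (i : α) (T : Finset α) :
    Decidable (Separates c g i T) :=
  inferInstanceAs (Decidable (_ ∧ _))

lemma Separates.mono {α : Type*} {c : ℕ} {g : α → ℕ} {i : α} {T T' : Finset α}
    (h : Separates c g i T') (hT : T ⊆ T') : Separates c g i T :=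
  ⟨h.1, fun x hx => h.2 x (hT hx)⟩

lemma card_filter_le_count_mul_le_card {α : Type*} [Fintype α] [DecidableEq α]
    (M : Multiset α) (c : ℕ) : #{x | c ≤ M.count x} * c ≤ Multiset.card M :=
  calc #{x | c ≤ M.count x} * c = ∑ x ∈ {x | c ≤ M.count x}, c := by rw [sum_const, smul_eq_mul]
    _ ≤ ∑ x ∈ {x | c ≤ M.count x}, M.count x := sum_le_sum fun x hx => (mem_filter.1 hx).2
    _ ≤ ∑ x, M.count x := sum_le_sum_of_subset (subset_univ _)
    _ = Multiset.card M := Multiset.sum_count_eq_card fun a _ => mem_univ a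

theorem dim2_multiset_le_card {α : Type*} [Fintype α] (k : ℕ) (S : Finset (Σ _ : ℕ, α → ℕ))
    (hS : ∀ c ∈ Icc 1 k, ∀ i (T : Finset α), i ∉ T → #T ≤ k / c →
      ∃ g, ⟨c, g⟩ ∈ S ∧ Separates c g i T) :
    dim2 {M : Multiset α // Multiset.card M ≤ k} ≤ #S := by
  classical
  rw [← Fintype.card_coe S]
  refine dim2_le_card (fun M => {p : S | ∃ i, p.1.2 i < p.1.1 ∧ p.1.1 ≤ M.1.count i})
    fun a b => ⟨fun hab => ?_, fun hab p => ?_⟩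
  · by_contra hab'
    obtain ⟨i, hi⟩ : ∃ i, b.1.count i < a.1.count i := by
      simpa [← Subtype.coe_le_coe, Multiset.le_iff_count] using hab'
    set c := a.1.count i
    have hc : c ∈ Icc 1 k := mem_Icc.2 ⟨by omega, (Multiset.count_le_card i a.1).trans a.2⟩
    have hT : #{x | c ≤ b.1.count x} ≤ k / c := (Nat.le_div_iff_mul_le (by omega)).2
      ((card_filter_le_count_mul_le_card b.1 c).trans b.2)
    obtain ⟨g, hgS, hgi, hgT⟩ := hS c hc i _ (by simpa using hi) hT
    obtain ⟨x, hgx, hcx⟩ : ∃ x, g x < c ∧ c ≤ b.1.count x := by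
      simpa using hab (x := ⟨⟨c, g⟩, hgS⟩) (by simpa using ⟨i, hgi, le_rfl⟩)
    exact (hgT x (by simpa using hcx)).not_gt hgx
  · simp only [mem_filter, mem_univ, true_and]
    exact fun ⟨i, h1, h2⟩ => ⟨i, h1, h2.trans (Multiset.count_le_of_le i hab)⟩

theorem exists_forall_exists_mem_of_sum_pow_lt {Ω ι : Type*} [Fintype Ω] [DecidableEq Ω]
    (E : Finset ι) (G : ι → Finset Ω) (r : ℕ)
    (h : ∑ e ∈ E, (Fintype.card Ω - #(G e)) ^ r < Fintype.card Ω ^ r) :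
    ∃ g : Fin r → Ω, ∀ e ∈ E, ∃ j, g j ∈ G e := by
  by_contra! hbad
  have hcover : (univ : Finset (Fin r → Ω)) ⊆
      E.biUnion fun e => Fintype.piFinset fun _ => (G e)ᶜ := by
    intro g _
    obtain ⟨e, he, hg⟩ := hbad g
    exact mem_biUnion.2 ⟨e, he, Fintype.mem_piFinset.2 fun j => mem_compl.2 (hg j)⟩
  refine h.not_ge ?_
  calc Fintype.card Ω ^ r = #(univ : Finset (Fin r → Ω)) := by simp
    _ ≤ _ := card_le_card hcover
    _ ≤ _ := card_biUnion_le
    _ = _ := by simp [card_compl]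

theorem exists_forall_exists_mem_of_log_card_le {Ω ι : Type*} [Fintype Ω] [DecidableEq Ω]
    [Nonempty Ω] (E : Finset ι) (G : ι → Finset Ω) {q : ℝ} (hq : 0 < q)
    (hG : ∀ e ∈ E, q * Fintype.card Ω ≤ #(G e)) {r : ℕ} (hr : r ≠ 0) (hE : log #E ≤ q * r) :
    ∃ g : Fin r → Ω, ∀ e ∈ E, ∃ j, g j ∈ G e := by
  rcases E.eq_empty_or_nonempty with rfl | hne
  · exact ⟨fun _ => Classical.arbitrary Ω, by simp⟩
  refine exists_forall_exists_mem_of_sum_pow_lt E G r ?_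
  set N : ℝ := (Fintype.card Ω : ℝ)
  have hterm : ∀ e ∈ E, (((Fintype.card Ω - #(G e)) ^ r : ℕ) : ℝ) < (exp (-q) * N) ^ r := by
    intro e he
    have hle : #(G e) ≤ Fintype.card Ω := card_le_univ _
    rw [Nat.cast_pow, Nat.cast_sub hle]
    refine pow_lt_pow_left₀ ?_ (sub_nonneg.2 (by exact_mod_cast hle)) hr
    calc N - #(G e) ≤ (1 - q) * N := by linarith [hG e he]
      _ < exp (-q) * N := by
        gcongr
        linarith [add_one_lt_exp (neg_ne_zero.2 hq.ne')]
  have hcard : (#E : ℝ) ≤ exp (q * r) := by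
    rw [← exp_log (Nat.cast_pos.2 hne.card_pos)]
    exact exp_le_exp.2 hE
  rw [← Nat.cast_lt (α := ℝ), Nat.cast_sum]
  calc ∑ e ∈ E, (((Fintype.card Ω - #(G e)) ^ r : ℕ) : ℝ)
      < ∑ e ∈ E, (exp (-q) * N) ^ r := sum_lt_sum_of_nonempty hne hterm
    _ = #E * exp (-(q * r)) * N ^ r := by
      rw [sum_const, nsmul_eq_mul, mul_pow, ← exp_nat_mul]; ring_nf
    _ ≤ exp (q * r) * exp (-(q * r)) * N ^ r := by gcongr
    _ = _ := by rw [← exp_add, add_neg_cancel, exp_zero, one_mul, Nat.cast_pow]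

lemma prod_ite_eq_ite_mem {α M : Type*} [Fintype α] [DecidableEq α] [CommMonoid M] {i : α}
    {T : Finset α} (hi : i ∉ T) (a b c : M) :
    ∏ x, (if x = i then a else if x ∈ T then b else c) =
      a * b ^ #T * c ^ (Fintype.card α - 1 - #T) := by
  rw [Fintype.prod_eq_mul_prod_compl i, if_pos rfl, mul_assoc]
  congr 1
  have hT : ({i}ᶜ : Finset α).filter (· ∈ T) = T := by
    ext x; simp only [mem_filter, mem_compl, mem_singleton, and_iff_right_iff_imp]
    exact fun hx => ne_of_mem_of_not_mem hx hi
  have hcard := card_filter_add_card_filter_not (s := ({i}ᶜ : Finset α)) (p := (· ∈ T))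
  rw [hT, card_compl, card_singleton] at hcard
  rw [prod_congr rfl fun x hx => if_neg (by simpa using hx), prod_ite, hT, prod_const,
    prod_const]
  congr 2
  omega

lemma card_filter_separates {α : Type*} [Fintype α] [DecidableEq α] {c s : ℕ} (hcs : c ≤ s) {i : α}
    {T : Finset α} (hi : i ∉ T) :
    #{g : α → Fin s | Separates c (fun x => g x) i T} =
      c * (s - c) ^ #T * s ^ (Fintype.card α - 1 - #T) := by
  have hpi : ({g : α → Fin s | Separates c (fun x => g x) i T} : Finset _) =
      Fintype.piFinset fun x =>
      if x = i then ({v | v < c} : Finset (Fin s))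
        else if x ∈ T then ({v | c ≤ (v : ℕ)} : Finset (Fin s)) else univ := by
    ext g
    rw [mem_filter, Fintype.mem_piFinset]
    simp only [mem_univ, true_and, Separates]
    constructor
    · rintro ⟨hgi, hgT⟩ x
      split_ifs with h1 h2 <;> simp_all
    · intro h
      refine ⟨by simpa using h i, fun x hx => ?_⟩
      simpa [ne_of_mem_of_not_mem hx hi, hx] using h x
  have hge : #{v : Fin s | c ≤ (v : ℕ)} = s - c := by
    have := card_filter_add_card_filter_not (s := (univ : Finset (Fin s)))
      (p := fun v => (v : ℕ) < c)
    simp only [not_lt, Fin.card_filter_val_lt, card_univ, Fintype.card_fin] at this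
    omega
  rw [hpi, Fintype.card_piFinset]
  simp only [apply_ite card, Fin.card_filter_val_lt, hge, card_univ, Fintype.card_fin,
    min_eq_right hcs]
  exact prod_ite_eq_ite_mem hi _ _ _

lemma add_pow_le_exp_one_mul_pow {k c t : ℕ} (h : t * c ≤ k) :
    ((k : ℝ) + c) ^ t ≤ exp 1 * k ^ t := by
  rcases Nat.eq_zero_or_pos k with rfl | hk
  · rcases Nat.mul_eq_zero.1 (Nat.le_zero.1 h) with rfl | rfl
    · simp
    · simpa using le_mul_of_one_le_left (pow_nonneg le_rfl t) (one_le_exp zero_le_one)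
  have hk' : (0 : ℝ) < k := by exact_mod_cast hk
  calc ((k : ℝ) + c) ^ t = (k * (c / k + 1)) ^ t := by field_simp; ring
    _ ≤ (k * exp (c / k)) ^ t := by gcongr; exact add_one_le_exp _
    _ = exp (t * c / k) * k ^ t := by rw [mul_pow, ← exp_nat_mul]; ring_nf
    _ ≤ exp 1 * k ^ t := by
      gcongr
      rw [div_le_one hk']
      exact_mod_cast h

lemma exists_fin_subset_image {α : Type*} [DecidableEq α] (T : Finset α) {m : ℕ} (h : #T ≤ m)
    (a : α) : ∃ t : Fin m → α, T ⊆ univ.image t := by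
  refine ⟨fun j => if hj : (j : ℕ) < #T then T.equivFin.symm ⟨j, hj⟩ else a, fun x hx => ?_⟩
  refine mem_image.2 ⟨Fin.castLE h (T.equivFin ⟨x, hx⟩), mem_univ _, ?_⟩
  simp

lemma div_exp_one_mul_add_pow_le {k c t n : ℕ} (ht : t * c ≤ k) (htn : t < n) :
    c / (exp 1 * (k + c)) * ((k : ℝ) + c) ^ n ≤ c * k ^ t * ((k : ℝ) + c) ^ (n - 1 - t) := by
  rcases Nat.eq_zero_or_pos c with rfl | hc
  · simp
  obtain ⟨r, rfl⟩ : ∃ r, n = t + 1 + r := ⟨n - 1 - t, by omega⟩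
  rw [show t + 1 + r - 1 - t = r by omega, pow_add, pow_succ]
  calc c / (exp 1 * (k + c)) * (((k : ℝ) + c) ^ t * (k + c) * (k + c) ^ r)
      = c / exp 1 * ((k + c) ^ t * (k + c) ^ r) := by field_simp
    _ ≤ c / exp 1 * (exp 1 * k ^ t * (k + c) ^ r) := by
      gcongr; exact add_pow_le_exp_one_mul_pow ht
    _ = c * k ^ t * ((k : ℝ) + c) ^ r := by field_simp

theorem exists_separating_finset (α : Type*) [Fintype α] (k : ℕ) {c : ℕ} (hc : 0 < c) :
    ∃ F : Finset (α → ℕ), (#F : ℝ) ≤ exp 1 * ((k : ℝ) / c + 1) ^ 2 * log (Fintype.card α) + 1 ∧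
      ∀ i (T : Finset α), i ∉ T → #T ≤ k / c → ∃ g ∈ F, Separates c g i T := by
  classical
  set R := exp 1 * ((k : ℝ) / c + 1) ^ 2 * log (Fintype.card α)
  have hR : 0 ≤ R := by have := log_natCast_nonneg (Fintype.card α); positivity
  have hq : (0 : ℝ) < c / (exp 1 * (k + c)) := by positivity
  have : NeZero (k + c) := ⟨by omega⟩
  -- Indexing the events `(i, T)` by tuples `t : Fin (k / c) → α` makes them easy to count;
  -- every admissible `T` is contained in some `univ.image t`.
  let T₀ : α × (Fin (k / c) → α) → Finset α := fun p => (univ.image p.2).erase p.1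
  have hcount : ∀ p, c / (exp 1 * (k + c)) * Fintype.card (α → Fin (k + c)) ≤
      #{g : α → Fin (k + c) | Separates c (fun x => g x) p.1 (T₀ p)} := by
    rintro ⟨i, t⟩
    have hm : #(T₀ (i, t)) * c ≤ k :=
      (Nat.le_div_iff_mul_le hc).1 (card_erase_le.trans (card_image_le.trans (by simp)))
    have hn : #(T₀ (i, t)) < Fintype.card α :=
      (card_lt_card (erase_ssubset (mem_univ i))).trans_le'
        (card_le_card (erase_subset_erase i (subset_univ _)))
    rw [card_filter_separates (by omega) (notMem_erase _ _), Fintype.card_fun, Fintype.card_fin,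
      Nat.add_sub_cancel]
    push_cast
    exact div_exp_one_mul_add_pow_le hm hn
  have hlog : log #(univ : Finset (α × (Fin (k / c) → α))) ≤
      c / (exp 1 * (k + c)) * (⌊R⌋₊ + 1 : ℕ) := by
    rw [card_univ, Fintype.card_prod, Fintype.card_fun, Fintype.card_fin, ← pow_succ',
      Nat.cast_pow, log_pow]
    calc ((k / c + 1 : ℕ) : ℝ) * log (Fintype.card α)
        ≤ ((k : ℝ) / c + 1) * log (Fintype.card α) := by
          gcongr; push_cast; linarith [Nat.cast_div_le (α := ℝ) (m := k) (n := c)]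
      _ = c / (exp 1 * (k + c)) * R := by simp only [R]; field_simp
      _ ≤ _ := by gcongr; push_cast; exact (Nat.lt_floor_add_one R).le
  obtain ⟨g, hg⟩ := exists_forall_exists_mem_of_log_card_le (ι := α × (Fin (k / c) → α))
    (r := ⌊R⌋₊ + 1) univ
    (fun p => {g : α → Fin (k + c) | Separates c (fun x => g x) p.1 (T₀ p)}) hq
    (fun p _ => hcount p) ⌊R⌋₊.succ_ne_zero hlog
  refine ⟨univ.image fun j x => (g j x : ℕ), ?_, fun i T hi hT => ?_⟩
  · calc (#_ : ℝ) ≤ (⌊R⌋₊ + 1 : ℕ) := by exact_mod_cast card_image_le.trans (by simp)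
      _ ≤ R + 1 := by push_cast; linarith [Nat.floor_le hR]
  · obtain ⟨t, ht⟩ := exists_fin_subset_image T hT i
    obtain ⟨j, hj⟩ := hg (i, t) (mem_univ _)
    exact ⟨_, mem_image_of_mem _ (mem_univ j), (mem_filter.1 hj).2.mono
      fun x hx => mem_erase.2 ⟨ne_of_mem_of_not_mem hx hi, ht hx⟩⟩

lemma sum_Icc_one_div_sq_lt_pi_sq_div_six (k : ℕ) :
    ∑ c ∈ Icc 1 k, 1 / (c : ℝ) ^ 2 < π ^ 2 / 6 := by
  have hle := sum_le_hasSum (Icc 1 (k + 1)) (fun j _ => by positivity) hasSum_zeta_two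
  rw [sum_Icc_succ_top (by omega)] at hle
  have : (0 : ℝ) < 1 / ((k + 1 : ℕ) : ℝ) ^ 2 := by positivity
  linarith

lemma sum_Icc_div_add_one_sq_lt (k : ℕ) (hk : 1 ≤ k) :
    ∑ c ∈ Icc 1 k, ((k : ℝ) / c + 1) ^ 2 < π ^ 2 / 6 * k ^ 2 + 2 * k * log k + 3 * k := by
  have hexpand : ∑ c ∈ Icc 1 k, ((k : ℝ) / c + 1) ^ 2 =
      k ^ 2 * ∑ c ∈ Icc 1 k, 1 / (c : ℝ) ^ 2 + 2 * k * ∑ c ∈ Icc 1 k, 1 / (c : ℝ) + k := by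
    calc ∑ c ∈ Icc 1 k, ((k : ℝ) / c + 1) ^ 2
        = ∑ c ∈ Icc 1 k, (k ^ 2 * (1 / (c : ℝ) ^ 2) + 2 * k * (1 / c) + 1) :=
          sum_congr rfl fun c _ => by ring
      _ = _ := by simp only [sum_add_distrib, mul_sum]; simp
  have hharmonic : ∑ c ∈ Icc 1 k, 1 / (c : ℝ) ≤ 1 + log k := by
    simpa [harmonic_eq_sum_Icc] using harmonic_le_one_add_log k
  have hk' : (0 : ℝ) < k := by exact_mod_cast hk
  have hsq := mul_lt_mul_of_pos_left (sum_Icc_one_div_sq_lt_pi_sq_div_six k) (pow_pos hk' 2)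
  have hinv := mul_le_mul_of_nonneg_left hharmonic (by positivity : (0 : ℝ) ≤ 2 * k)
  rw [hexpand]
  linarith

theorem dim2_multiset_lt_general (n k : ℕ) (hn : 2 ≤ n) (hk1 : 1 ≤ k) :
    (dim2 {M : Multiset (Fin n) // Multiset.card M ≤ k} : ℝ)
      < Real.exp 1 * (Real.pi ^ 2 / 6 * (k : ℝ) ^ 2 + 2 * k * Real.log k + 3 * k)
          * Real.log n + k := by
  choose! F hFcard hF using fun c (hc : c ∈ Icc 1 k) =>
    exists_separating_finset (Fin n) k (mem_Icc.1 hc).1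
  have hdim := dim2_multiset_le_card k ((Icc 1 k).sigma F) fun c hc i T hi hT =>
    (hF c hc i T hi hT).imp fun g ⟨hg, hsep⟩ => ⟨mem_sigma.2 ⟨hc, hg⟩, hsep⟩
  rw [card_sigma] at hdim
  have hlog : 0 < log n := log_pos (by exact_mod_cast hn)
  calc (dim2 _ : ℝ) ≤ ∑ c ∈ Icc 1 k, (#(F c) : ℝ) := by exact_mod_cast hdim
    _ ≤ ∑ c ∈ Icc 1 k, (exp 1 * ((k : ℝ) / c + 1) ^ 2 * log n + 1) :=
      sum_le_sum fun c hc => by simpa using hFcard c hc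
    _ = exp 1 * log n * ∑ c ∈ Icc 1 k, ((k : ℝ) / c + 1) ^ 2 + k := by
      rw [sum_add_distrib, mul_sum]
      simp [mul_right_comm]
    _ < exp 1 * log n * (π ^ 2 / 6 * k ^ 2 + 2 * k * log k + 3 * k) + k := by
      gcongr
      exact sum_Icc_div_add_one_sq_lt k hk1
    _ = _ := by ring

/-- For `n ≥ 2` and `1 ≤ k ≤ n - 1`,
`dim₂(M^n_{[0,k]}) < e (π²/6 k² + 2k log k + 3k) log n + k`, where `M^n_{[0,k]}` is
the poset of multisets with elements in `{1,…,n}` of total size at most `k`,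
ordered by multiset inclusion. -/
theorem dim2_multiset_lt (n k : ℕ) (hn : 2 ≤ n) (hk1 : 1 ≤ k) (hk2 : k ≤ n - 1) :
    (dim2 {M : Multiset (Fin n) // Multiset.card M ≤ k} : ℝ)
      < Real.exp 1 * (Real.pi ^ 2 / 6 * (k : ℝ) ^ 2 + 2 * k * Real.log k + 3 * k)
          * Real.log n + k :=
  dim2_multiset_lt_general n k hn hk1
end
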